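/- arXiv:1303.3794 — 5 statements merged into one kernel-verified Lean document; each statement's English description precedes it below -/
import Mathlib

section
/- For every matrix X with entries in the ring Z/p^k (p prime, k ≥ 1) of size n × m, there exist an invertible n × n matrix Q and an invertible m × m matrix S over Z/p^k such that the product QXS is in normal form, i.e., its (i,j)-entry equals δ_{i,j}·p^{r_i} for integers 0 ≤ r_1 ≤ r_2 ≤ ⋯ ≤ r_n ≤ k. -/
/-!
Every element of `ZMod (p ^ k)` is a unit times `p ^ r` with `r ≤ k`, so divisibility in this ring
is total. Over any ring with total divisibility, some entry of a nonzero matrix divides all the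
others; permuting it into the corner and clearing its row and column splits off a `1 × 1` block,
and induction gives a diagonal matrix whose entries form a divisibility chain. Rescaling rows by
units replaces each entry by the power of `p` it is associated to, and `p ^ a ∣ p ^ b` forces
`a ≤ b` for `a ≤ k` because `1 - p * c` is a unit.
-/

open Matrix

namespace ZMod

variable {p k : ℕ}

theorem exists_le_associated_prime_pow (hp : p.Prime) (x : ZMod (p ^ k)) :
    ∃ r ≤ k, Associated x ((p : ZMod (p ^ k)) ^ r) := by
  have : NeZero (p ^ k) := ⟨pow_ne_zero _ hp.ne_zero⟩
  rcases eq_or_ne x 0 with rfl | hx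
  · refine ⟨k, le_rfl, ?_⟩
    rw [← Nat.cast_pow, ZMod.natCast_self]
  obtain ⟨r, s, hps, hxs⟩ :=
    Nat.exists_eq_pow_mul_and_not_dvd ((ZMod.val_ne_zero x).2 hx) p hp.ne_one
  have hs : IsUnit (s : ZMod (p ^ k)) :=
    (ZMod.isUnit_iff_coprime s (p ^ k)).2 ((hp.coprime_iff_not_dvd.2 hps).symm.pow_right k)
  refine ⟨r, ?_, ?_⟩
  · have hpos : 0 < x.val := Nat.pos_of_ne_zero ((ZMod.val_ne_zero x).2 hx)
    have : p ^ r < p ^ k := (Nat.le_of_dvd hpos (Dvd.intro _ hxs.symm)).trans_lt (ZMod.val_lt x)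
    exact ((Nat.pow_lt_pow_iff_right hp.one_lt).1 this).le
  · rw [← ZMod.natCast_zmod_val x, hxs, Nat.cast_mul, Nat.cast_pow]
    exact associated_mul_unit_left _ _ hs

theorem le_of_prime_pow_dvd_prime_pow (hp : p.Prime) {a b : ℕ} (ha : a ≤ k)
    (h : (p : ZMod (p ^ k)) ^ a ∣ (p : ZMod (p ^ k)) ^ b) : a ≤ b := by
  by_contra! hba
  obtain ⟨c, hc⟩ := h
  have hp_nil : IsNilpotent (p : ZMod (p ^ k)) := ⟨k, by rw [← Nat.cast_pow, ZMod.natCast_self]⟩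
  have hunit : IsUnit (1 - (p : ZMod (p ^ k)) ^ (a - b) * c) :=
    ((Commute.all _ _).isNilpotent_mul_right (hp_nil.pow_of_pos (by omega))).isUnit_one_sub
  have hb : (p : ZMod (p ^ k)) ^ b = 0 := by
    refine hunit.mul_left_eq_zero.1 ?_
    rw [mul_sub, mul_one, ← mul_assoc, ← pow_add, Nat.add_sub_cancel' hba.le, ← hc, sub_self]
  rw [← Nat.cast_pow, ZMod.natCast_eq_zero_iff, Nat.pow_dvd_pow_iff_le_right hp.one_lt] at hb
  omega

instance [Fact p.Prime] : PreValuationRing (ZMod (p ^ k)) :=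
  PreValuationRing.iff_dvd_total.2 ⟨fun x y => by
    obtain ⟨a, -, hx⟩ := exists_le_associated_prime_pow (k := k) Fact.out x
    obtain ⟨b, -, hy⟩ := exists_le_associated_prime_pow (k := k) Fact.out y
    rw [hx.dvd_iff_dvd_left, hy.dvd_iff_dvd_right, hx.dvd_iff_dvd_right, hy.dvd_iff_dvd_left]
    exact (le_total a b).imp (pow_dvd_pow _) (pow_dvd_pow _)⟩

end ZMod

theorem PreValuationRing.exists_dvd_forall {R ι : Type*} [CommMonoid R] [PreValuationRing R]
    [Finite ι] [Nonempty ι] (f : ι → R) : ∃ i, ∀ j, f i ∣ f j := by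
  obtain ⟨i, -, hi⟩ := Set.Finite.exists_minimalFor (fun i => Associates.mk (f i)) Set.univ
    Set.finite_univ Set.univ_nonempty
  refine ⟨i, fun j => (ValuationRing.dvd_total (f i) (f j)).elim id fun hji => ?_⟩
  exact Associates.mk_le_mk_iff_dvd.1 (hi trivial (Associates.mk_le_mk_iff_dvd.2 hji))

theorem Fin.monotone_cons {α : Type*} [Preorder α] {n : ℕ} {a : α} {f : Fin n → α}
    (hf : Monotone f) (ha : ∀ i, a ≤ f i) : Monotone (Fin.cons a f : Fin (n + 1) → α) := by
  intro i j hij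
  cases i using Fin.cases with
  | zero => cases j using Fin.cases with
    | zero => exact le_rfl
    | succ j => simpa using ha j
  | succ i => cases j using Fin.cases with
    | zero => exact absurd hij (by simp)
    | succ j => simpa using hf (Fin.succ_le_succ_iff.1 hij)

namespace Matrix

variable {R : Type*} [CommRing R]

section Equivalent

variable {m n : Type*} [Fintype m] [Fintype n] [DecidableEq m] [DecidableEq n]

def IsEquivalent (X Y : Matrix m n R) : Prop :=
  ∃ (Q : Matrix m m R) (S : Matrix n n R), IsUnit Q ∧ IsUnit S ∧ Q * X * S = Y

theorem IsEquivalent.of_eq {X Y : Matrix m n R} (h : X = Y) : IsEquivalent X Y :=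
  ⟨1, 1, isUnit_one, isUnit_one, by simp [h]⟩

theorem IsEquivalent.trans {X Y Z : Matrix m n R} (hXY : IsEquivalent X Y)
    (hYZ : IsEquivalent Y Z) : IsEquivalent X Z := by
  obtain ⟨Q, S, hQ, hS, rfl⟩ := hXY
  obtain ⟨Q', S', hQ', hS', rfl⟩ := hYZ
  exact ⟨Q' * Q, S * S', hQ'.mul hQ, hS.mul hS', by simp only [Matrix.mul_assoc]⟩

theorem IsEquivalent.transpose {X Y : Matrix m n R} (h : IsEquivalent X Y) :
    IsEquivalent Xᵀ Yᵀ := by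
  obtain ⟨Q, S, hQ, hS, rfl⟩ := h
  exact ⟨Sᵀ, Qᵀ, (isUnit_transpose S).2 hS, (isUnit_transpose Q).2 hQ, by
    simp only [transpose_mul, Matrix.mul_assoc]⟩

theorem IsEquivalent.dvd {X Y : Matrix m n R} (h : IsEquivalent X Y) {c : R}
    (hX : ∀ i j, c ∣ X i j) (i : m) (j : n) : c ∣ Y i j := by
  obtain ⟨Q, S, -, -, rfl⟩ := h
  exact Finset.dvd_sum fun l _ =>
    (Finset.dvd_sum fun l' _ => (hX l' l).mul_left _).mul_right _

theorem isEquivalent_mul_left (X : Matrix m n R) {Q : Matrix m m R} (hQ : IsUnit Q) :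
    IsEquivalent X (Q * X) :=
  ⟨Q, 1, hQ, isUnit_one, Matrix.mul_one _⟩

theorem isUnit_permMatrix (σ : Equiv.Perm n) : IsUnit (σ.permMatrix R) := by
  simpa using (Group.isUnit σ⁻¹).map (permMatrixHom (R := R))

theorem isEquivalent_submatrix (X : Matrix m n R) (σ : Equiv.Perm m) (τ : Equiv.Perm n) :
    IsEquivalent X (X.submatrix σ τ) :=
  ⟨σ.permMatrix R, τ⁻¹.permMatrix R, isUnit_permMatrix σ, isUnit_permMatrix τ⁻¹, by
    rw [PEquiv.toMatrix_toPEquiv_mul, PEquiv.mul_toMatrix_toPEquiv, submatrix_submatrix]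
    rfl⟩

end Equivalent

variable {n m : ℕ}

def rectDiagonal (d : Fin n → R) : Matrix (Fin n) (Fin m) R :=
  of fun i j => if (i : ℕ) = j then d i else 0

theorem isEquivalent_rectDiagonal_of_associated {d e : Fin n → R}
    (h : ∀ i, Associated (d i) (e i)) :
    IsEquivalent (rectDiagonal d : Matrix (Fin n) (Fin m) R) (rectDiagonal e) := by
  choose u hu using h
  refine ⟨diagonal fun i => (u i : R), 1,
    isUnit_diagonal.2 (Pi.isUnit_iff.2 fun i => (u i).isUnit), isUnit_one, ?_⟩
  ext i j
  simp [rectDiagonal, diagonal_mul, ← hu, mul_comm]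

def diagCons (a : R) (Y : Matrix (Fin n) (Fin m) R) : Matrix (Fin (n + 1)) (Fin (m + 1)) R :=
  of (Fin.cons (Fin.cons a 0) fun i => Fin.cons 0 (Y i))

@[simp] theorem diagCons_zero_zero (a : R) (Y : Matrix (Fin n) (Fin m) R) :
    diagCons a Y 0 0 = a := rfl

@[simp] theorem diagCons_zero_succ (a : R) (Y : Matrix (Fin n) (Fin m) R) (j : Fin m) :
    diagCons a Y 0 j.succ = 0 := rfl

@[simp] theorem diagCons_succ_zero (a : R) (Y : Matrix (Fin n) (Fin m) R) (i : Fin n) :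
    diagCons a Y i.succ 0 = 0 := rfl

@[simp] theorem diagCons_succ_succ (a : R) (Y : Matrix (Fin n) (Fin m) R) (i : Fin n)
    (j : Fin m) : diagCons a Y i.succ j.succ = Y i j := rfl

theorem diagCons_mul {l : ℕ} (a b : R) (Y : Matrix (Fin n) (Fin m) R)
    (Z : Matrix (Fin m) (Fin l) R) : diagCons a Y * diagCons b Z = diagCons (a * b) (Y * Z) := by
  ext i j
  rw [mul_apply, Fin.sum_univ_succ]
  cases i using Fin.cases <;> cases j using Fin.cases <;> simp [mul_apply]

theorem diagCons_one : (diagCons 1 1 : Matrix (Fin (n + 1)) (Fin (n + 1)) R) = 1 := by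
  ext i j
  cases i using Fin.cases <;> cases j using Fin.cases <;>
    simp [one_apply, Fin.succ_ne_zero, eq_comm]

theorem rectDiagonal_cons (a : R) (d : Fin n → R) :
    (rectDiagonal (Fin.cons a d) : Matrix (Fin (n + 1)) (Fin (m + 1)) R) =
      diagCons a (rectDiagonal d) := by
  ext i j
  cases i using Fin.cases <;> cases j using Fin.cases <;> simp [rectDiagonal]

theorem eq_diagCons (X : Matrix (Fin (n + 1)) (Fin (m + 1)) R)
    (hrow : ∀ j : Fin m, X 0 j.succ = 0) (hcol : ∀ i : Fin n, X i.succ 0 = 0) :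
    X = diagCons (X 0 0) (X.submatrix Fin.succ Fin.succ) := by
  ext i j
  cases i using Fin.cases <;> cases j using Fin.cases <;> simp [hrow, hcol]

theorem IsEquivalent.diagCons {Y Z : Matrix (Fin n) (Fin m) R} (a : R) (h : IsEquivalent Y Z) :
    IsEquivalent (diagCons a Y) (diagCons a Z) := by
  obtain ⟨Q, S, hQ, hS, rfl⟩ := h
  let φ : ∀ l, Matrix (Fin l) (Fin l) R →* Matrix (Fin (l + 1)) (Fin (l + 1)) R := fun _ =>
    { toFun := Matrix.diagCons 1
      map_one' := diagCons_one
      map_mul' := fun A B => by rw [diagCons_mul, one_mul] }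
  exact ⟨φ n Q, φ m S, hQ.map _, hS.map _, by simp [φ, diagCons_mul]⟩

theorem exists_isEquivalent_col_eq_zero {ι : Type*} [Fintype ι] [DecidableEq ι]
    (X : Matrix (Fin (n + 1)) ι R) (j : ι) (h : ∀ i, X 0 j ∣ X i j) :
    ∃ X', IsEquivalent X X' ∧ X' 0 = X 0 ∧ ∀ i : Fin n, X' i.succ j = 0 := by
  choose c hc using h
  set g : Fin (n + 1) → R := Fin.cons 0 fun i => c i.succ
  set N : Matrix (Fin (n + 1)) (Fin (n + 1)) R := vecMulVec g (Pi.single 0 1)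
  have hN : IsNilpotent N := ⟨2, by simp [N, sq, vecMulVec_mul_vecMulVec, g]⟩
  have hNX : ∀ i j', ((1 - N) * X : Matrix (Fin (n + 1)) ι R) i j' = X i j' - g i * X 0 j' :=
    fun i j' => by
    simp [N, Matrix.sub_mul, vecMulVec_mul, vecMulVec_apply]
  refine ⟨(1 - N) * X, isEquivalent_mul_left X hN.isUnit_one_sub, funext fun j' => ?_,
    fun i => ?_⟩
  · simp [hNX, g]
  · simp [hNX, g, hc i.succ, mul_comm]

theorem exists_isEquivalent_diagCons_of_dvd (X : Matrix (Fin (n + 1)) (Fin (m + 1)) R)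
    (hcol : ∀ i, X 0 0 ∣ X i 0) (hrow : ∀ j, X 0 0 ∣ X 0 j) :
    ∃ Y, IsEquivalent X (diagCons (X 0 0) Y) := by
  obtain ⟨X₁, hXX₁, hrow₁, hcol₁⟩ := exists_isEquivalent_col_eq_zero X 0 hcol
  obtain ⟨X₂, hX₁X₂, hrow₂, hcol₂⟩ := exists_isEquivalent_col_eq_zero X₁ᵀ 0 fun j => by
    simpa [hrow₁] using hrow j
  have hX₂ : X₂ᵀ = diagCons (X 0 0) (X₂ᵀ.submatrix Fin.succ Fin.succ) := by
    have hcorner : X₂ 0 0 = X 0 0 := by simp [hrow₂, hrow₁]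
    rw [← hcorner]
    exact eq_diagCons _ hcol₂ fun i => by simp [hrow₂, hcol₁]
  have hXX₂ : IsEquivalent X X₂ᵀ := hXX₁.trans (by simpa using hX₁X₂.transpose)
  rw [hX₂] at hXX₂
  exact ⟨_, hXX₂⟩

theorem exists_isEquivalent_diagCons (X : Matrix (Fin (n + 1)) (Fin (m + 1)) R)
    (i₀ : Fin (n + 1)) (j₀ : Fin (m + 1)) (h : ∀ i j, X i₀ j₀ ∣ X i j) :
    ∃ Y, IsEquivalent X (diagCons (X i₀ j₀) Y) ∧ ∀ i j, X i₀ j₀ ∣ Y i j := by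
  set X' := X.submatrix (Equiv.swap 0 i₀) (Equiv.swap 0 j₀)
  have hcorner : X' 0 0 = X i₀ j₀ := by simp [X']
  obtain ⟨Y, hX'Y⟩ := exists_isEquivalent_diagCons_of_dvd X' (fun i => hcorner ▸ h _ _)
    (fun j => hcorner ▸ h _ _)
  have hXY := (isEquivalent_submatrix X _ _).trans (hcorner ▸ hX'Y)
  exact ⟨Y, hXY, fun i j => by simpa using hXY.dvd h i.succ j.succ⟩

/-- The entries `d i` with `m ≤ i` do not occur in `rectDiagonal d`; tracking a common divisor `c`
is what makes them continue the divisibility chain in the induction. -/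
theorem exists_isEquivalent_rectDiagonal [PreValuationRing R] (X : Matrix (Fin n) (Fin m) R)
    {c : R} (hc : ∀ i j, c ∣ X i j) :
    ∃ d : Fin n → R, IsEquivalent X (rectDiagonal d) ∧ (∀ i, c ∣ d i) ∧
      Monotone (Associates.mk ∘ d) := by
  induction n generalizing m c with
  | zero => exact ⟨0, .of_eq (ext fun i => i.elim0), fun i => i.elim0, fun i => i.elim0⟩
  | succ n ih =>
    cases m with
    | zero =>
      exact ⟨fun _ => 0, .of_eq (ext fun _ j => j.elim0), fun _ => dvd_zero c, monotone_const⟩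
    | succ m =>
      obtain ⟨⟨i₀, j₀⟩, hpivot⟩ := PreValuationRing.exists_dvd_forall
        fun q : Fin (n + 1) × Fin (m + 1) => X q.1 q.2
      obtain ⟨Y, hXY, hY⟩ := exists_isEquivalent_diagCons X i₀ j₀ fun i j => hpivot (i, j)
      obtain ⟨d, hYd, hd, hmono⟩ := ih Y hY
      refine ⟨Fin.cons (X i₀ j₀) d, ?_, fun i => ?_, ?_⟩
      · rw [rectDiagonal_cons]
        exact hXY.trans (hYd.diagCons _)
      · cases i using Fin.cases with
        | zero => exact hc i₀ j₀
        | succ i => exact (hc i₀ j₀).trans (hd i)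
      · rw [Fin.comp_cons]
        exact Fin.monotone_cons hmono fun i => Associates.mk_le_mk_iff_dvd.2 (hd i)

end Matrix

theorem stmt0_general (p : ℕ) (hp : p.Prime) (k : ℕ) (n m : ℕ)
    (X : Matrix (Fin n) (Fin m) (ZMod (p ^ k))) :
    ∃ (Q : Matrix (Fin n) (Fin n) (ZMod (p ^ k)))
      (S : Matrix (Fin m) (Fin m) (ZMod (p ^ k))) (r : Fin n → ℕ),
      IsUnit Q ∧ IsUnit S ∧ Monotone r ∧ (∀ i, r i ≤ k) ∧
      ∀ i j, (Q * X * S) i j =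
        if (i : ℕ) = (j : ℕ) then (p : ZMod (p ^ k)) ^ (r i) else 0 := by
  have : Fact p.Prime := ⟨hp⟩
  obtain ⟨d, hXd, -, hd⟩ := exists_isEquivalent_rectDiagonal X (c := 1) fun _ _ => one_dvd _
  choose r hrk hdr using fun i => ZMod.exists_le_associated_prime_pow hp (d i)
  obtain ⟨Q, S, hQ, hS, hQXS⟩ := hXd.trans (isEquivalent_rectDiagonal_of_associated hdr)
  refine ⟨Q, S, r, hQ, hS, fun i j hij => ?_, hrk, fun i j => by rw [hQXS]; rfl⟩
  apply ZMod.le_of_prime_pow_dvd_prime_pow hp (hrk i)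
  rw [← (hdr i).dvd_iff_dvd_left, ← (hdr j).dvd_iff_dvd_right]
  exact Associates.mk_le_mk_iff_dvd.1 (hd hij)

/-- Smith-type normal form over `ZMod (p^k)`: every `n × m` matrix `X` can be
transformed by invertible matrices `Q`, `S` into a matrix whose `(i,j)` entry is
`δ_{i,j} · p^{r i}` with `0 ≤ r 1 ≤ ⋯ ≤ r n ≤ k`. -/
theorem stmt0 (p : ℕ) (hp : p.Prime) (k : ℕ) (hk : 1 ≤ k) (n m : ℕ)
    (X : Matrix (Fin n) (Fin m) (ZMod (p ^ k))) :
    ∃ (Q : Matrix (Fin n) (Fin n) (ZMod (p ^ k)))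
      (S : Matrix (Fin m) (Fin m) (ZMod (p ^ k))) (r : Fin n → ℕ),
      IsUnit Q ∧ IsUnit S ∧ Monotone r ∧ (∀ i, r i ≤ k) ∧
      ∀ i j, (Q * X * S) i j =
        if (i : ℕ) = (j : ℕ) then (p : ZMod (p ^ k)) ^ (r i) else 0 :=
  stmt0_general p hp k n m X
end

section
/- Every subgroup C of (Z/p^k Z)^m is the row space of a matrix of the form PQω, where P is an l × m matrix (l ≤ m) with P_{i,j} = δ_{i,j}·p^{r_i} for some 0 ≤ r_1 ≤ ⋯ ≤ r_l < k, Q is an invertible upper-triangular m × m matrix with all diagonal entries equal to 1, and ω is an m × m permutation matrix. -/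
/-!
Over `ℤ/p^kℤ` every nonzero element is `p^s` times a unit. Among the nonzero entries of the
elements of `C` pick one of least order `r₀`, at coordinate `j₀`; rescaling by a unit gives
`x ∈ C` with `x j₀ = p^r₀`. Since `p^r₀` divides every entry of every element of `C`, we get
`x = p^r₀ • w` with `w j₀ = 1` and `C = ⟨x⟩ + (C ∩ {z | z j₀ = 0})`. Recursing on the second
summand yields generators `p^(r i) • w i` with `r` monotone, distinct pivots `j i`,
`w i (j i) = 1` and `w i (j i') = 0` for `i' < i`. After a permutation moving `j i` to `i`, the
`w i` are the first rows of an upper unitriangular `Q`, completed by rows of the identity.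
-/

/-- The subgroup of `R^m` generated by the rows of a matrix `X`. -/
def rowSpace {R : Type*} [CommRing R] {l m : ℕ} (X : Matrix (Fin l) (Fin m) R) :
    AddSubgroup (Fin m → R) :=
  AddSubgroup.closure (Set.range fun i => X i)

/-- The permutation matrix of `τ`, with `(i,j)` entry `δ_{i, τ j}`. -/
def permMat {R : Type*} [CommRing R] {m : ℕ} (τ : Equiv.Perm (Fin m)) :
    Matrix (Fin m) (Fin m) R :=
  fun i j => if i = τ j then 1 else 0

open Submodule

variable {R ι : Type*} [CommRing R]

theorem ZMod.exists_eq_pow_mul_isUnit {p : ℕ} (hp : p.Prime) (k : ℕ) (x : ZMod (p ^ k))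
    (hx : x ≠ 0) : ∃ (s : ℕ) (u : ZMod (p ^ k)), IsUnit u ∧ x = (p : ZMod (p ^ k)) ^ s * u := by
  have : NeZero (p ^ k) := ⟨pow_ne_zero _ hp.ne_zero⟩
  obtain ⟨s, n, hpn, hn⟩ :=
    Nat.exists_eq_pow_mul_and_not_dvd ((ZMod.val_ne_zero x).mpr hx) p hp.ne_one
  refine ⟨s, n, (ZMod.isUnit_iff_coprime n _).mpr ?_, ?_⟩
  · exact ((Nat.Prime.coprime_iff_not_dvd hp).mpr hpn).symm.pow_right k
  · rw [← ZMod.natCast_zmod_val x, hn]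
    push_cast
    rfl

theorem ZMod.lt_of_natCast_pow_ne_zero {p k r : ℕ} (h : (p : ZMod (p ^ k)) ^ r ≠ 0) : r < k := by
  by_contra! hkr
  exact h (pow_eq_zero_of_le hkr (by rw [← Nat.cast_pow, ZMod.natCast_self]))

theorem AddSubgroup.toZModSubmodule_closure {n : ℕ} {M : Type*} [AddCommGroup M]
    [Module (ZMod n) M] (s : Set M) :
    toZModSubmodule n (closure s) = Submodule.span (ZMod n) s :=
  le_antisymm (fun _ hx => (closure_le (Submodule.span (ZMod n) s).toAddSubgroup).mpr
      Submodule.subset_span hx)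
    (Submodule.span_le.mpr subset_closure)

theorem Equiv.Perm.exists_apply_castLE_eq {l m : ℕ} (hl : l ≤ m) {f : Fin l → Fin m}
    (hf : Function.Injective f) : ∃ σ : Equiv.Perm (Fin m), ∀ i, σ (Fin.castLE hl i) = f i := by
  classical
  let e := (Equiv.ofInjective _ (Fin.castLE_injective hl)).symm.trans (Equiv.ofInjective f hf)
  refine ⟨e.extendSubtype, fun i => ?_⟩
  rw [e.extendSubtype_apply_of_mem _ ⟨i, rfl⟩]
  simp [e, Equiv.ofInjective_symm_apply]

-- Without `(R := R)` the product below elaborates through `CStarMatrix`'s multiplication.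
theorem mul_permMat_apply {l m : ℕ} (X : Matrix (Fin l) (Fin m) R) (τ : Equiv.Perm (Fin m))
    (i : Fin l) (j : Fin m) : (X * permMat (R := R) τ) i j = X i (τ j) := by
  simp [Matrix.mul_apply, permMat]

theorem of_ite_mul_apply {l m : ℕ} (hl : l ≤ m) (d : Fin l → R) (Q : Matrix (Fin m) (Fin m) R)
    (i : Fin l) (j : Fin m) :
    (Matrix.of (fun (i : Fin l) (j : Fin m) => if (i : ℕ) = (j : ℕ) then d i else 0) * Q) i j =
      d i * Q (Fin.castLE hl i) j := by
  rw [Matrix.mul_apply, Finset.sum_eq_single (Fin.castLE hl i)]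
  · simp
  · intro b _ hb
    simp [show (i : ℕ) ≠ b from fun h => hb (Fin.ext h.symm)]
  · simp

theorem Submodule.eq_span_singleton_sup_inf_ker_proj {C : Submodule R (ι → R)} {x : ι → R}
    (hx : x ∈ C) {j₀ : ι} (hdvd : ∀ z ∈ C, x j₀ ∣ z j₀) :
    C = (R ∙ x) ⊔ (C ⊓ LinearMap.ker (LinearMap.proj j₀)) := by
  refine le_antisymm (fun z hz => ?_) (sup_le ((span_singleton_le_iff_mem _ _).mpr hx) inf_le_left)
  obtain ⟨a, ha⟩ := hdvd z hz
  refine mem_sup.mpr ⟨a • x, mem_span_singleton.mpr ⟨a, rfl⟩, z - a • x,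
    ⟨C.sub_mem hz (C.smul_mem a hx), ?_⟩, add_sub_cancel _ _⟩
  simp [ha, mul_comm]

theorem Submodule.exists_pow_entry_of_ne_bot {π : R}
    (hπ : ∀ x : R, x ≠ 0 → ∃ (s : ℕ) (u : R), IsUnit u ∧ x = π ^ s * u)
    {C : Submodule R (ι → R)} (hC : C ≠ ⊥) :
    ∃ (r₀ : ℕ) (x : ι → R) (j₀ : ι), x ∈ C ∧ x j₀ = π ^ r₀ ∧ π ^ r₀ ≠ 0 ∧
      (∀ z ∈ C, ∀ j, π ^ r₀ ∣ z j) ∧ (∀ z ∈ C, ∀ j t, z j = π ^ t → π ^ t ≠ 0 → r₀ ≤ t) := by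
  classical
  have hex : ∃ t, ∃ z ∈ C, ∃ j, z j ≠ 0 ∧ ∃ u, IsUnit u ∧ z j = π ^ t * u := by
    obtain ⟨z, hz, hz0⟩ := (Submodule.ne_bot_iff C).mp hC
    obtain ⟨j, hj⟩ := Function.ne_iff.mp hz0
    obtain ⟨t, u, hu, hzj⟩ := hπ _ hj
    exact ⟨t, z, hz, j, hj, u, hu, hzj⟩
  have hmin {z} (hz : z ∈ C) {j t u} (hzj : z j ≠ 0) (hu : IsUnit u) (h : z j = π ^ t * u) :
      Nat.find hex ≤ t :=
    Nat.find_min' hex ⟨z, hz, j, hzj, u, hu, h⟩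
  obtain ⟨y, hy, j₀, hyj, u, hu, hyu⟩ := Nat.find_spec hex
  refine ⟨Nat.find hex, hu.unit⁻¹ • y, j₀, C.smul_mem _ hy, ?_, ?_, fun z hz j => ?_,
    fun z hz j t hzj ht => hmin hz (hzj ▸ ht) isUnit_one (by rw [hzj, mul_one])⟩
  · rw [Pi.smul_apply, hyu, Units.smul_def, smul_eq_mul, mul_left_comm, hu.val_inv_mul, mul_one]
  · exact fun h => hyj (by rw [hyu, h, zero_mul])
  · by_cases hzj : z j = 0
    · rw [hzj]
      exact dvd_zero _
    obtain ⟨t, u', hu', h⟩ := hπ _ hzj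
    exact h ▸ (pow_dvd_pow π (hmin hz hzj hu' h)).mul_right u'

structure EchelonGenerators (π : R) (C : Submodule R (ι → R)) where
  l : ℕ
  r : Fin l → ℕ
  w : Fin l → ι → R
  pivot : Fin l → ι
  monotone_r : Monotone r
  pow_ne_zero : ∀ i, π ^ r i ≠ 0
  pivot_injective : Function.Injective pivot
  w_pivot : ∀ i, w i (pivot i) = 1
  w_pivot_of_lt : ∀ i i', i' < i → w i (pivot i') = 0
  span_eq : span R (Set.range fun i => π ^ r i • w i) = C

namespace EchelonGenerators

variable {π : R} {C : Submodule R (ι → R)} (E : EchelonGenerators π C)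

def gen (i : Fin E.l) : ι → R := π ^ E.r i • E.w i

theorem gen_mem (i : Fin E.l) : E.gen i ∈ C :=
  E.span_eq.le (subset_span ⟨i, rfl⟩)

theorem gen_pivot (i : Fin E.l) : E.gen i (E.pivot i) = π ^ E.r i := by
  simp [gen, E.w_pivot]

theorem pivot_ne_of_forall_mem {j : ι} (h : ∀ z ∈ C, z j = 0) (i : Fin E.l) : E.pivot i ≠ j :=
  fun hi => E.pow_ne_zero i (E.gen_pivot i ▸ hi ▸ h _ (E.gen_mem i))

def bot (π : R) : EchelonGenerators π (⊥ : Submodule R (ι → R)) where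
  l := 0
  r := Fin.elim0
  w := Fin.elim0
  pivot := Fin.elim0
  monotone_r := fun i => i.elim0
  pow_ne_zero := fun i => i.elim0
  pivot_injective := fun i => i.elim0
  w_pivot := fun i => i.elim0
  w_pivot_of_lt := fun i => i.elim0
  span_eq := by simp

variable [DecidableEq ι]

/-- The rows `E.w i` are zeroed at `j₀`, which leaves the generators unchanged because `C`
vanishes there. -/
def cons {r₀ : ℕ} {w₀ : ι → R} {j₀ : ι} (hr₀ : π ^ r₀ ≠ 0) (hw₀ : w₀ j₀ = 1)
    (hC : ∀ z ∈ C, z j₀ = 0) (hle : ∀ i, r₀ ≤ E.r i) :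
    EchelonGenerators π ((R ∙ (π ^ r₀ • w₀)) ⊔ C) where
  l := E.l + 1
  r := Fin.cons r₀ E.r
  w := Fin.cons w₀ fun i => Function.update (E.w i) j₀ 0
  pivot := Fin.cons j₀ E.pivot
  monotone_r := monotone_iff_forall_lt.mpr <|
    (Fin.liftFun_cons (· ≤ ·)).mpr ⟨hle, monotone_iff_forall_lt.mp E.monotone_r⟩
  pow_ne_zero := Fin.cases hr₀ E.pow_ne_zero
  pivot_injective := Fin.cons_injective_iff.mpr
    ⟨fun ⟨i, hi⟩ => E.pivot_ne_of_forall_mem hC i hi, E.pivot_injective⟩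
  w_pivot := Fin.cases hw₀ fun i => by
    simp [Function.update_of_ne (E.pivot_ne_of_forall_mem hC i), E.w_pivot]
  w_pivot_of_lt := by
    intro i i' hi'
    cases i using Fin.cases with
    | zero => exact absurd hi' (Fin.not_lt_zero i')
    | succ i =>
      cases i' using Fin.cases with
      | zero => simp
      | succ i' =>
        simp [Function.update_of_ne (E.pivot_ne_of_forall_mem hC i'),
          E.w_pivot_of_lt i i' (Fin.succ_lt_succ_iff.mp hi')]
  span_eq := by
    have hgen (i : Fin E.l) : π ^ E.r i • Function.update (E.w i) j₀ 0 = E.gen i := by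
      rw [← Function.update_smul, smul_zero]
      exact Function.update_eq_self_iff.mpr (hC _ (E.gen_mem i)).symm
    rw [Fin.range_fin_succ, span_insert]
    refine congrArg _ (Eq.trans ?_ E.span_eq)
    congr 2
    exact funext hgen

end EchelonGenerators

theorem EchelonGenerators.nonempty_of_forall_notMem {π : R} [DecidableEq ι]
    (hπ : ∀ x : R, x ≠ 0 → ∃ (s : ℕ) (u : R), IsUnit u ∧ x = π ^ s * u)
    (S : Finset ι) (C : Submodule R (ι → R)) (hC : ∀ z ∈ C, ∀ j ∉ S, z j = 0) :
    Nonempty (EchelonGenerators π C) := by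
  induction S using Finset.strongInduction generalizing C with
  | H S ih =>
  by_cases hbot : C = ⊥
  · exact hbot ▸ ⟨EchelonGenerators.bot π⟩
  obtain ⟨r₀, x, j₀, hx, hxj, hr₀, hdvd, hmin⟩ := Submodule.exists_pow_entry_of_ne_bot hπ hbot
  have hj₀ : j₀ ∈ S := by
    by_contra h
    exact hr₀ (hxj ▸ hC x hx j₀ h)
  obtain ⟨E⟩ := ih (S.erase j₀) (Finset.erase_ssubset hj₀)
    (C ⊓ LinearMap.ker (LinearMap.proj j₀)) fun z hz j hj => by
      by_cases hjj : j = j₀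
      · exact hjj ▸ hz.2
      · exact hC z hz.1 j fun h => hj (Finset.mem_erase.mpr ⟨hjj, h⟩)
  choose c hc using hdvd x hx
  have hxw : π ^ r₀ • Function.update c j₀ 1 = x := by
    funext j
    by_cases hj : j = j₀
    · simp [hj, hxj]
    · simp [hj, hc j]
  have hle (i : Fin E.l) : r₀ ≤ E.r i :=
    hmin _ (E.gen_mem i).1 _ _ (E.gen_pivot i) (E.pow_ne_zero i)
  have hCeq := Submodule.eq_span_singleton_sup_inf_ker_proj hx fun z hz => hxj ▸ hdvd z hz j₀
  rw [← hxw] at hCeq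
  exact ⟨hCeq ▸ E.cons hr₀ (by simp) (fun z hz => hz.2) hle⟩

namespace EchelonGenerators

variable {m : ℕ} {π : R} {C : Submodule R (Fin m → R)} (E : EchelonGenerators π C)

theorem l_le : E.l ≤ m := by
  simpa using Fintype.card_le_of_injective _ E.pivot_injective

/-- The matrix `Q` of the theorem, for `σ` sending `Fin.castLE _ i` to `E.pivot i`. -/
def padMatrix (σ : Equiv.Perm (Fin m)) : Matrix (Fin m) (Fin m) R :=
  Matrix.of fun a b => if h : (a : ℕ) < E.l then E.w ⟨a, h⟩ (σ b) else if a = b then 1 else 0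

variable {E} {σ : Equiv.Perm (Fin m)}

theorem padMatrix_castLE (i : Fin E.l) (b : Fin m) :
    E.padMatrix σ (Fin.castLE E.l_le i) b = E.w i (σ b) := by
  simp [padMatrix]

theorem of_ite_mul_padMatrix_mul_permMat :
    Matrix.of (fun (i : Fin E.l) (j : Fin m) => if (i : ℕ) = (j : ℕ) then π ^ E.r i else 0) *
      E.padMatrix σ * permMat (R := R) σ.symm = Matrix.of E.gen := by
  ext i j
  rw [mul_permMat_apply, of_ite_mul_apply E.l_le, padMatrix_castLE, Equiv.apply_symm_apply]
  rfl

theorem padMatrix_isUpperTriangular (hσ : ∀ i, σ (Fin.castLE E.l_le i) = E.pivot i) :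
    (E.padMatrix σ).IsUpperTriangular := by
  intro a b hba
  by_cases ha : (a : ℕ) < E.l
  · have hb : (b : ℕ) < E.l := lt_trans hba ha
    have := E.w_pivot_of_lt ⟨a, ha⟩ ⟨b, hb⟩ hba
    simpa [padMatrix, ha, ← hσ] using this
  · have hab : a ≠ b := (ne_of_lt hba).symm
    simp [padMatrix, ha, hab]

theorem padMatrix_apply_self (hσ : ∀ i, σ (Fin.castLE E.l_le i) = E.pivot i) (a : Fin m) :
    E.padMatrix σ a a = 1 := by
  by_cases ha : (a : ℕ) < E.l
  · simpa [padMatrix, ha, ← hσ] using E.w_pivot ⟨a, ha⟩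
  · simp [padMatrix, ha]

theorem isUnit_padMatrix (hσ : ∀ i, σ (Fin.castLE E.l_le i) = E.pivot i) :
    IsUnit (E.padMatrix σ) := by
  rw [Matrix.isUnit_iff_isUnit_det, Matrix.det_of_isUpperTriangular
    (padMatrix_isUpperTriangular hσ)]
  simp [padMatrix_apply_self hσ]

end EchelonGenerators

theorem stmt3_general (p : ℕ) (hp : p.Prime) (k : ℕ) (m : ℕ)
    (C : AddSubgroup (Fin m → ZMod (p ^ k))) :
    ∃ (l : ℕ) (_ : l ≤ m) (r : Fin l → ℕ) (P : Matrix (Fin l) (Fin m) (ZMod (p ^ k)))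
      (Q : Matrix (Fin m) (Fin m) (ZMod (p ^ k))) (τ : Equiv.Perm (Fin m)),
      Monotone r ∧ (∀ i, r i < k) ∧
      (∀ i j, P i j = if (i : ℕ) = (j : ℕ) then (p : ZMod (p ^ k)) ^ (r i) else 0) ∧
      IsUnit Q ∧ (∀ i j : Fin m, j < i → Q i j = 0) ∧ (∀ i, Q i i = 1) ∧
      C = rowSpace (P * Q * permMat τ) := by
  obtain ⟨E⟩ := EchelonGenerators.nonempty_of_forall_notMem (ZMod.exists_eq_pow_mul_isUnit hp k)
    Finset.univ (AddSubgroup.toZModSubmodule (p ^ k) C) (by simp)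
  obtain ⟨σ, hσ⟩ := Equiv.Perm.exists_apply_castLE_eq E.l_le E.pivot_injective
  refine ⟨E.l, E.l_le, E.r, _, E.padMatrix σ, σ.symm, E.monotone_r,
    fun i => ZMod.lt_of_natCast_pow_ne_zero (E.pow_ne_zero i), fun _ _ => rfl,
    EchelonGenerators.isUnit_padMatrix hσ, EchelonGenerators.padMatrix_isUpperTriangular hσ,
    EchelonGenerators.padMatrix_apply_self hσ, ?_⟩
  apply (AddSubgroup.toZModSubmodule (p ^ k)).injective
  refine E.span_eq.symm.trans ?_
  rw [rowSpace, AddSubgroup.toZModSubmodule_closure]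
  congr 2
  exact EchelonGenerators.of_ite_mul_padMatrix_mul_permMat.symm

/-- Every subgroup `C` of `(ZMod (p^k))^m` is the row space of a matrix `P * Q * ω` with
`P i j = δ_{i,j} p^{r i}` (`0 ≤ r 1 ≤ ⋯ ≤ r l < k`, `l ≤ m`), `Q` invertible upper-triangular
with diagonal `1`'s, and `ω` a permutation matrix. -/
theorem stmt3 (p : ℕ) (hp : p.Prime) (k : ℕ) (hk : 1 ≤ k) (m : ℕ)
    (C : AddSubgroup (Fin m → ZMod (p ^ k))) :
    ∃ (l : ℕ) (_ : l ≤ m) (r : Fin l → ℕ) (P : Matrix (Fin l) (Fin m) (ZMod (p ^ k)))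
      (Q : Matrix (Fin m) (Fin m) (ZMod (p ^ k))) (τ : Equiv.Perm (Fin m)),
      Monotone r ∧ (∀ i, r i < k) ∧
      (∀ i j, P i j = if (i : ℕ) = (j : ℕ) then (p : ZMod (p ^ k)) ^ (r i) else 0) ∧
      IsUnit Q ∧ (∀ i j : Fin m, j < i → Q i j = 0) ∧ (∀ i, Q i i = 1) ∧
      C = rowSpace (P * Q * permMat τ) :=
  stmt3_general p hp k m C
end

section
/- Let G be a finite abelian group that decomposes as a direct product G = ∏_{p ∈ I} G^{(p)} of its Sylow p-subgroups, and let φ: H → G be a group homomorphism from an abelian group H. Then φ is surjective if and only if the composition q^{(p)} ∘ φ with each projection q^{(p)}: G → G^{(p)} is surjective; moreover, for an automorphism α of H, α(ker φ) = ker φ if and only if α(ker(q^{(p)} ∘ φ)) = ker(q^{(p)} ∘ φ) for all p ∈ I. -/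
/-!
Proof idea: the factors have pairwise coprime orders, so with `N i = Pi.cardCompl G i` the
product of the orders of the other factors, raising to the `N i`-th power kills every coordinate
except the `i`-th, on which it is a bijection. Hence the image of `φ` contains `Pi.mulSingle i g`
as soon as `q^{(i)} ∘ φ` hits the `N i`-th root of `g`, and `ker (q^{(i)} ∘ φ)` is the preimage
of `ker φ` under `h ↦ h ^ N i`, a map commuting with every automorphism of `H`; conversely
`ker φ` is the intersection of the `ker (q^{(i)} ∘ φ)`.
-/

open Finset

theorem IsPGroup.coprime_natCard_of_ne {G₁ G₂ : Type*} [Group G₁] [Group G₂] [Finite G₁]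
    [Finite G₂] {p₁ p₂ : ℕ} (hp₁ : p₁.Prime) (hp₂ : p₂.Prime) (hne : p₁ ≠ p₂)
    (h₁ : IsPGroup p₁ G₁) (h₂ : IsPGroup p₂ G₂) : (Nat.card G₁).Coprime (Nat.card G₂) := by
  have := Fact.mk hp₁
  have := Fact.mk hp₂
  obtain ⟨n₁, hn₁⟩ := IsPGroup.iff_card.mp h₁
  obtain ⟨n₂, hn₂⟩ := IsPGroup.iff_card.mp h₂
  rw [hn₁, hn₂]
  exact ((Nat.coprime_primes hp₁ hp₂).mpr hne).pow n₁ n₂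

theorem Subgroup.map_comap_powMonoidHom_of_map_eq {H : Type*} [CommGroup H] (α : H ≃* H)
    {K : Subgroup H} (hK : K.map α.toMonoidHom = K) (n : ℕ) :
    (K.comap (powMonoidHom n)).map α.toMonoidHom = K.comap (powMonoidHom n) := by
  have hcomm : (powMonoidHom n).comp α.symm.toMonoidHom =
      α.symm.toMonoidHom.comp (powMonoidHom n) :=
    MonoidHom.ext fun h => (map_pow α.symm h n).symm
  rw [Subgroup.map_equiv_eq_comap_symm', Subgroup.comap_comap, hcomm, ← Subgroup.comap_comap,
    ← Subgroup.map_equiv_eq_comap_symm', hK]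

theorem Subgroup.map_iInf_of_forall_map_eq {H ι : Type*} [Group H] (α : H ≃* H)
    {K : ι → Subgroup H} (hK : ∀ i, (K i).map α.toMonoidHom = K i) :
    (⨅ i, K i).map α.toMonoidHom = ⨅ i, K i := by
  simp only [Subgroup.map_equiv_eq_comap_symm', Subgroup.comap_iInf] at hK ⊢
  exact iInf_congr hK

namespace Pi

variable {ι : Type*} [Fintype ι] [DecidableEq ι] {G : ι → Type*}

noncomputable def cardCompl (G : ι → Type*) (i : ι) : ℕ :=
  ∏ j ∈ univ.erase i, Nat.card (G j)

section CommGroup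

variable [∀ i, CommGroup (G i)]

theorem pow_cardCompl (x : ∀ j, G j) (i : ι) :
    x ^ cardCompl G i = mulSingle i (x i ^ cardCompl G i) := by
  funext j
  by_cases hji : j = i
  · subst hji
    simp
  · obtain ⟨k, hk⟩ : Nat.card (G j) ∣ cardCompl G i :=
      dvd_prod_of_mem _ (mem_erase.mpr ⟨hji, mem_univ j⟩)
    rw [Pi.pow_apply, mulSingle_eq_of_ne hji, hk, pow_mul, pow_card_eq_one', one_pow]

variable (hcop : Pairwise fun i j => (Nat.card (G i)).Coprime (Nat.card (G j)))
include hcop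

theorem bijective_pow_cardCompl (i : ι) :
    Function.Bijective fun g : G i => g ^ cardCompl G i :=
  (powCoprime (Nat.Coprime.prod_right fun _ hj => hcop (mem_erase.mp hj).1.symm)).bijective

theorem surjective_iff_forall_surjective_evalMonoidHom_comp {H : Type*} [Group H]
    (φ : H →* ∀ i, G i) :
    Function.Surjective φ ↔ ∀ i, Function.Surjective ((evalMonoidHom G i).comp φ) := by
  refine ⟨fun hφ i => (Function.surjective_eval i).comp hφ, fun hφ x => ?_⟩
  have hsingle : ∀ i, mulSingle i (x i) ∈ φ.range := by
    intro i
    obtain ⟨g, hg⟩ := (bijective_pow_cardCompl hcop i).2 (x i)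
    obtain ⟨h, hh⟩ := hφ i g
    refine ⟨h ^ cardCompl G i, ?_⟩
    rw [map_pow, pow_cardCompl, ← hg, ← hh]
    rfl
  rw [← univ_prod_mulSingle x]
  exact Subgroup.prod_mem _ fun i _ => hsingle i

theorem ker_evalMonoidHom_comp {H : Type*} [CommGroup H] (φ : H →* ∀ i, G i) (i : ι) :
    ((evalMonoidHom G i).comp φ).ker = φ.ker.comap (powMonoidHom (cardCompl G i)) := by
  ext h
  have hpow := pow_cardCompl (φ h) i
  simp only [MonoidHom.mem_ker, MonoidHom.comp_apply, evalMonoidHom_apply,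
    Subgroup.mem_comap, powMonoidHom_apply, map_pow, hpow, mulSingle_eq_one_iff]
  exact ⟨fun h1 => by rw [h1, one_pow],
    fun h1 => (bijective_pow_cardCompl hcop i).1 (h1.trans (one_pow _).symm)⟩

end CommGroup

end Pi

theorem MonoidHom.ker_eq_iInf_ker_evalMonoidHom_comp {ι H : Type*} {G : ι → Type*} [Group H]
    [∀ i, Group (G i)] (φ : H →* ∀ i, G i) :
    φ.ker = ⨅ i, ((Pi.evalMonoidHom G i).comp φ).ker := by
  ext h
  simp [Subgroup.mem_iInf, funext_iff]

/-- Let `G = ∏_{p ∈ I} G^{(p)}` be a finite abelian group decomposed as a product of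
its Sylow subgroups (p-groups for distinct primes), and `φ : H → G` a homomorphism from
an abelian group `H`.  Then `φ` is surjective iff each `q^{(p)} ∘ φ` is, and for any
automorphism `α` of `H`, `α(ker φ) = ker φ` iff `α(ker (q^{(p)} ∘ φ)) = ker (q^{(p)} ∘ φ)`
for every `p`. -/
theorem stmt13 {ι : Type*} [Fintype ι] (prm : ι → ℕ) (hprm : ∀ i, (prm i).Prime)
    (hinj : Function.Injective prm) (G : ι → Type*) [∀ i, CommGroup (G i)]
    [∀ i, Finite (G i)] (hpg : ∀ i, IsPGroup (prm i) (G i))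
    (H : Type*) [CommGroup H] (φ : H →* ((i : ι) → G i)) :
    (Function.Surjective φ ↔ ∀ i, Function.Surjective ((Pi.evalMonoidHom G i).comp φ)) ∧
    (∀ α : H ≃* H,
      Subgroup.map α.toMonoidHom φ.ker = φ.ker ↔
        ∀ i, Subgroup.map α.toMonoidHom ((Pi.evalMonoidHom G i).comp φ).ker =
          ((Pi.evalMonoidHom G i).comp φ).ker) := by
  classical
  have hcop : Pairwise fun i j => (Nat.card (G i)).Coprime (Nat.card (G j)) :=
    fun i j hij => (hpg i).coprime_natCard_of_ne (hprm i) (hprm j) (hinj.ne hij) (hpg j)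
  refine ⟨Pi.surjective_iff_forall_surjective_evalMonoidHom_comp hcop φ, fun α => ?_⟩
  refine ⟨fun hα i => ?_, fun hα => ?_⟩
  · rw [Pi.ker_evalMonoidHom_comp hcop]
    exact Subgroup.map_comap_powMonoidHom_of_map_eq α hα _
  · rw [φ.ker_eq_iInf_ker_evalMonoidHom_comp]
    exact Subgroup.map_iInf_of_forall_map_eq α hα
end

section
/- The automorphism group of the Petersen graph is isomorphic to the symmetric group S_5. -/
/-- The Petersen graph: vertices are the 2-element subsets of a 5-element set,
two vertices being adjacent iff they are disjoint. -/
def Petersen : SimpleGraph {s : Finset (Fin 5) // s.card = 2} where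
  Adj a b := Disjoint a.1 b.1
  symm := ⟨fun a b h => h.symm⟩
  loopless := by
    constructor
    intro a h
    have h2 : (a : Finset (Fin 5)) = ∅ := by simpa using (disjoint_self.mp h)
    have := a.2
    rw [h2] at this
    simp at this

/-!
Four pairwise intersecting 2-subsets of a 5-set have a common point, so the independent sets
of size 4 in the Petersen graph are exactly the five stars `{s | x ∈ s}`. An automorphism `f`
therefore permutes the stars, say `star x ↦ star (σ x)`; as `s` lies in `star x` for both
points `x ∈ s`, the vertex `f s` contains both points of `σ '' s`, i.e. `f s = σ '' s`.
-/

theorem SimpleGraph.IsNIndepSet.map_iso {α β : Type*} {G : SimpleGraph α} {H : SimpleGraph β}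
    {n : ℕ} {s : Finset α} (h : G.IsNIndepSet n s) (f : G ≃g H) :
    H.IsNIndepSet n (s.map f.toEquiv.toEmbedding) := by
  refine ⟨?_, by simpa using h.card_eq⟩
  rw [Finset.coe_map]
  rintro _ ⟨a, ha, rfl⟩ _ ⟨b, hb, rfl⟩ hab
  exact h.isIndepSet ha hb (ne_of_apply_ne _ hab) ∘ f.map_adj_iff.1

namespace Petersen

abbrev Vertex := {s : Finset (Fin 5) // s.card = 2}

instance : DecidableRel Petersen.Adj := fun a b => inferInstanceAs (Decidable (Disjoint a.1 b.1))

def star (x : Fin 5) : Finset Vertex := {s | x ∈ s.1}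

@[simp] lemma mem_star {x : Fin 5} {s : Vertex} : s ∈ star x ↔ x ∈ s.1 := by simp [star]

lemma star_subset_star_iff {x y : Fin 5} : star x ⊆ star y ↔ x = y := by
  revert x y; decide

lemma isNIndepSet_star (x : Fin 5) : Petersen.IsNIndepSet 4 (star x) := by
  refine ⟨fun s hs t ht _ hst => ?_, by revert x; decide⟩
  simp only [Finset.mem_coe, mem_star] at hs ht
  exact Finset.disjoint_left.1 hst hs ht

lemma exists_eq_star_of_isNIndepSet {S : Finset Vertex} (hS : Petersen.IsNIndepSet 4 S) :
    ∃ x, S = star x := by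
  revert S
  decide +kernel

def permIso (σ : Equiv.Perm (Fin 5)) : Petersen ≃g Petersen where
  toEquiv := σ.finsetCongr.subtypeEquiv fun s => by simp
  map_rel_iff' := Finset.disjoint_map _

@[simp] lemma coe_permIso_apply (σ : Equiv.Perm (Fin 5)) (s : Vertex) :
    (permIso σ s).1 = s.1.map σ.toEmbedding :=
  rfl

def ofPerm : Equiv.Perm (Fin 5) →* (Petersen ≃g Petersen) where
  toFun := permIso
  map_one' := RelIso.ext fun s => Subtype.ext (by simp [Finset.map_eq_image])
  map_mul' σ τ := RelIso.ext fun s =>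
    Subtype.ext (by simp [Finset.map_eq_image, Finset.image_image])

lemma ofPerm_injective : Function.Injective ofPerm := by
  rw [injective_iff_map_eq_one]
  intro σ hσ
  refine Equiv.ext fun x => ?_
  have hfix (s : Vertex) : (permIso σ s).1 = s.1 := by
    rw [show permIso σ = 1 from hσ, RelIso.one_apply]
  have : star x ⊆ star (σ x) := fun s hs => by
    rw [mem_star, ← hfix, coe_permIso_apply, Finset.mem_map_equiv, Equiv.symm_apply_apply]
    exact mem_star.1 hs
  exact (star_subset_star_iff.1 this).symm

lemma exists_map_star_eq_star (f : Petersen ≃g Petersen) (x : Fin 5) :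
    ∃ y, (star x).map f.toEquiv.toEmbedding = star y :=
  exists_eq_star_of_isNIndepSet ((isNIndepSet_star x).map_iso f)

noncomputable def starMap (f : Petersen ≃g Petersen) (x : Fin 5) : Fin 5 :=
  (exists_map_star_eq_star f x).choose

lemma map_star (f : Petersen ≃g Petersen) (x : Fin 5) :
    (star x).map f.toEquiv.toEmbedding = star (starMap f x) :=
  (exists_map_star_eq_star f x).choose_spec

lemma starMap_injective (f : Petersen ≃g Petersen) : Function.Injective (starMap f) := by
  intro x y hxy
  have : (star x).map f.toEquiv.toEmbedding = (star y).map f.toEquiv.toEmbedding := by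
    rw [map_star, map_star, hxy]
  exact star_subset_star_iff.1 (Finset.map_inj.1 this).subset

lemma starMap_mem_apply (f : Petersen ≃g Petersen) {x : Fin 5} {s : Vertex} (hx : x ∈ s.1) :
    starMap f x ∈ (f s).1 := by
  rw [← mem_star, ← map_star]
  exact Finset.mem_map_of_mem _ (mem_star.2 hx)

lemma ofPerm_surjective : Function.Surjective ofPerm := by
  intro f
  refine ⟨Equiv.ofBijective _ (Finite.injective_iff_bijective.1 (starMap_injective f)), ?_⟩
  refine RelIso.ext fun s => Subtype.ext (Finset.eq_of_subset_of_card_le ?_ ?_)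
  · intro y hy
    obtain ⟨x, hx, rfl⟩ := Finset.mem_map.1 hy
    exact starMap_mem_apply f hx
  · rw [(f s).2, (ofPerm _ s).2]

end Petersen

/-- The automorphism group of the Petersen graph is isomorphic to the symmetric
group `S₅`. -/
theorem stmt16 : Nonempty ((Petersen ≃g Petersen) ≃* Equiv.Perm (Fin 5)) :=
  ⟨(MulEquiv.ofBijective Petersen.ofPerm
    ⟨Petersen.ofPerm_injective, Petersen.ofPerm_surjective⟩).symm⟩
end

section
/- Let p be prime, k ≥ 1, 1 ≤ r ≤ k, and suppose Q ∈ GL(b, Z/p^k Z) is block upper-triangular of the form [[Q_1, Q_2],[0, Q_3]] with Q_1 invertible of size i × i. Define Q̄ ∈ GL(b, Z/p^r Z) as the reduction mod p^r of [[I, Q_1^{-1}Q_2],[0, I]]. If for some matrix S ∈ GL(b, Z/p^k Z) the matrix Q S Q^{-1} reduced mod p^r has zero upper-right i × (b−i) block, then Q̄ S̄ Q̄^{-1} also has zero upper-right i × (b−i) block, where S̄ is the reduction of S mod p^r. -/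
/-!
Since `Q₁` is invertible, `Q = diag(Q₁, Q₃) · U` with `U = [[I, Q₁⁻¹Q₂],[0, I]]`, so
`Q S Q⁻¹ = diag(Q₁, Q₃) · (U S U⁻¹) · diag(Q₁, Q₃)⁻¹`. Reduction is a ring homomorphism, so
it commutes with conjugation by invertible matrices, and conjugating by a block-diagonal
matrix multiplies the upper-right block by the invertible matrices `Q̄₁` and `Q̄₃⁻¹`. Hence
the upper-right block of `Q̄ S̄ Q̄⁻¹`, the reduction of `U S U⁻¹`, vanishes as well.
-/

namespace Matrix

section Reduction

variable {n R S : Type*} [Fintype n] [DecidableEq n] [CommRing R] [CommRing S]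

theorem map_nonsing_inv_of_isUnit (f : R →+* S) {A : Matrix n n R} (hA : IsUnit A) :
    A⁻¹.map f = (A.map f)⁻¹ := by
  refine (inv_eq_left_inv ?_).symm
  rw [← Matrix.map_mul, nonsing_inv_mul _ ((isUnit_iff_isUnit_det A).mp hA),
    Matrix.map_one _ f.map_zero f.map_one]

theorem map_mul_mul_nonsing_inv (f : R →+* S) {A : Matrix n n R} (hA : IsUnit A)
    (M : Matrix n n R) :
    (A * M * A⁻¹).map f = A.map f * M.map f * (A.map f)⁻¹ := by
  rw [Matrix.map_mul, Matrix.map_mul, map_nonsing_inv_of_isUnit f hA]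

end Reduction

section Blocks

variable {m n R : Type*} [Fintype m] [Fintype n] [DecidableEq m] [DecidableEq n] [CommRing R]

theorem fromBlocks_zero₂₁_eq_fromBlocks_diagonal_mul {A : Matrix m m R} (hA : IsUnit A)
    (B : Matrix m n R) (D : Matrix n n R) :
    fromBlocks A B 0 D = fromBlocks A 0 0 D * fromBlocks 1 (A⁻¹ * B) 0 1 := by
  rw [fromBlocks_multiply]
  simp [mul_nonsing_inv_cancel_left _ _ ((isUnit_iff_isUnit_det A).mp hA)]

theorem toBlocks₁₂_conj_fromBlocks_diagonal {A : Matrix m m R} {D : Matrix n n R}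
    (hA : IsUnit A) (hD : IsUnit D) (M : Matrix (m ⊕ n) (m ⊕ n) R) :
    (fromBlocks A 0 0 D * M * (fromBlocks A 0 0 D)⁻¹).toBlocks₁₂ =
      A * M.toBlocks₁₂ * D⁻¹ := by
  rw [inv_fromBlocks_zero₂₁_of_isUnit_iff _ _ _ (iff_of_true hA hD), ← fromBlocks_toBlocks M,
    fromBlocks_multiply, fromBlocks_multiply]
  simp [Matrix.mul_assoc]

theorem toBlocks₁₂_eq_zero_of_conj_fromBlocks_diagonal {A : Matrix m m R} {D : Matrix n n R}
    (hA : IsUnit A) (hD : IsUnit D) {M : Matrix (m ⊕ n) (m ⊕ n) R}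
    (h : (fromBlocks A 0 0 D * M * (fromBlocks A 0 0 D)⁻¹).toBlocks₁₂ = 0) :
    M.toBlocks₁₂ = 0 := by
  rw [toBlocks₁₂_conj_fromBlocks_diagonal hA hD] at h
  calc M.toBlocks₁₂ = A⁻¹ * (A * M.toBlocks₁₂ * D⁻¹) * D := by
        rw [Matrix.mul_assoc A, nonsing_inv_mul_cancel_left _ _ ((isUnit_iff_isUnit_det A).mp hA),
          nonsing_inv_mul_cancel_right _ _ ((isUnit_iff_isUnit_det D).mp hD)]
    _ = 0 := by rw [h, Matrix.mul_zero, Matrix.zero_mul]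

end Blocks

end Matrix

theorem stmt19_general (p : ℕ) (k r : ℕ)
    (i j : ℕ)
    (Q1 : Matrix (Fin i) (Fin i) (ZMod (p ^ k)))
    (Q2 : Matrix (Fin i) (Fin j) (ZMod (p ^ k)))
    (Q3 : Matrix (Fin j) (Fin j) (ZMod (p ^ k)))
    (hQ1 : IsUnit Q1)
    (Q : Matrix (Fin i ⊕ Fin j) (Fin i ⊕ Fin j) (ZMod (p ^ k)))
    (hQ : Q = Matrix.fromBlocks Q1 Q2 0 Q3)
    (hQunit : IsUnit Q)
    (S : Matrix (Fin i ⊕ Fin j) (Fin i ⊕ Fin j) (ZMod (p ^ k)))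
    (c : ZMod (p ^ k) →+* ZMod (p ^ r))
    (Qbar : Matrix (Fin i ⊕ Fin j) (Fin i ⊕ Fin j) (ZMod (p ^ r)))
    (hQbar : Qbar = (Matrix.fromBlocks 1 (Q1⁻¹ * Q2) 0 1).map c)
    (hzero : ∀ (a : Fin i) (d : Fin j),
      ((Q * S * Q⁻¹).map c) (Sum.inl a) (Sum.inr d) = 0) :
    ∀ (a : Fin i) (d : Fin j),
      (Qbar * S.map c * Qbar⁻¹) (Sum.inl a) (Sum.inr d) = 0 := by
  set U : Matrix (Fin i ⊕ Fin j) (Fin i ⊕ Fin j) (ZMod (p ^ k)) :=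
    Matrix.fromBlocks 1 (Q1⁻¹ * Q2) 0 1
  set D : Matrix (Fin i ⊕ Fin j) (Fin i ⊕ Fin j) (ZMod (p ^ k)) := Matrix.fromBlocks Q1 0 0 Q3
  have hQ3 : IsUnit Q3 := (Matrix.isUnit_fromBlocks_zero₂₁.mp (hQ ▸ hQunit)).2
  have hU : IsUnit U := Matrix.isUnit_fromBlocks_zero₂₁.mpr ⟨isUnit_one, isUnit_one⟩
  have hD : IsUnit D := Matrix.isUnit_fromBlocks_zero₂₁.mpr ⟨hQ1, hQ3⟩
  have hQDU : Q = D * U :=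
    hQ.trans (Matrix.fromBlocks_zero₂₁_eq_fromBlocks_diagonal_mul hQ1 Q2 Q3)
  have hconj : Q * S * Q⁻¹ = D * (U * S * U⁻¹) * D⁻¹ := by
    rw [hQDU, Matrix.mul_inv_rev]
    simp only [Matrix.mul_assoc]
  have hDmap : D.map c = Matrix.fromBlocks (Q1.map c) 0 0 (Q3.map c) := by
    simp [D, Matrix.fromBlocks_map]
  have hreduced : (Q * S * Q⁻¹).map c =
      D.map c * (Qbar * S.map c * Qbar⁻¹) * (D.map c)⁻¹ := by
    rw [hconj, Matrix.map_mul_mul_nonsing_inv c hD, Matrix.map_mul_mul_nonsing_inv c hU, hQbar]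
  have hblock : (Qbar * S.map c * Qbar⁻¹).toBlocks₁₂ = 0 := by
    have hQ1c : IsUnit (Q1.map c) := hQ1.map c.mapMatrix
    have hQ3c : IsUnit (Q3.map c) := hQ3.map c.mapMatrix
    refine Matrix.toBlocks₁₂_eq_zero_of_conj_fromBlocks_diagonal hQ1c hQ3c ?_
    rw [← hDmap, ← hreduced]
    exact funext₂ hzero
  exact fun a d => congrFun₂ hblock a d

/-- Reduction of admissible solutions to lower exponents (key linear algebra step):
if `Q = [[Q₁, Q₂],[0, Q₃]]` is an invertible block upper-triangular matrix over
`ZMod (p^k)` with `Q₁` invertible, `Q̄` is the reduction mod `p^r` of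
`[[I, Q₁⁻¹Q₂],[0, I]]`, and for some invertible `S` the matrix `Q S Q⁻¹` reduced mod
`p^r` has zero upper-right block, then `Q̄ S̄ Q̄⁻¹` also has zero upper-right block. -/
theorem stmt19 (p : ℕ) (hp : p.Prime) (k r : ℕ) (hr1 : 1 ≤ r) (hrk : r ≤ k)
    (i j : ℕ)
    (Q1 : Matrix (Fin i) (Fin i) (ZMod (p ^ k)))
    (Q2 : Matrix (Fin i) (Fin j) (ZMod (p ^ k)))
    (Q3 : Matrix (Fin j) (Fin j) (ZMod (p ^ k)))
    (hQ1 : IsUnit Q1)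
    (Q : Matrix (Fin i ⊕ Fin j) (Fin i ⊕ Fin j) (ZMod (p ^ k)))
    (hQ : Q = Matrix.fromBlocks Q1 Q2 0 Q3)
    (hQunit : IsUnit Q)
    (S : Matrix (Fin i ⊕ Fin j) (Fin i ⊕ Fin j) (ZMod (p ^ k)))
    (hS : IsUnit S)
    (c : ZMod (p ^ k) →+* ZMod (p ^ r))
    (hc : c = ZMod.castHom (pow_dvd_pow p hrk) (ZMod (p ^ r)))
    (Qbar : Matrix (Fin i ⊕ Fin j) (Fin i ⊕ Fin j) (ZMod (p ^ r)))
    (hQbar : Qbar = (Matrix.fromBlocks 1 (Q1⁻¹ * Q2) 0 1).map c)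
    (hzero : ∀ (a : Fin i) (d : Fin j),
      ((Q * S * Q⁻¹).map c) (Sum.inl a) (Sum.inr d) = 0) :
    ∀ (a : Fin i) (d : Fin j),
      (Qbar * S.map c * Qbar⁻¹) (Sum.inl a) (Sum.inr d) = 0 :=
  stmt19_general p k r i j Q1 Q2 Q3 hQ1 Q hQ hQunit S c Qbar hQbar hzero
end
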